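/- A family of intervals with pairwise distinct left endpoints is irredundant; likewise a family of intervals with pairwise distinct right endpoints is irredundant. -/

import Mathlib

/-!
Order the intervals by decreasing left endpoint: each `[a, b)` contains `a`, which lies in no
interval with a larger left endpoint. With distinct right endpoints, order them by increasing
right endpoint instead and use the point `b - 1`.
-/

open scoped Classical

/-- A finite family of sets is irredundant if its members can be arranged in a
sequence such that each set contains a point not in any of the preceding sets. -/
def Irredundant (F : Finset (Set ℤ)) : Prop :=
  ∃ l : List (Set ℤ), l.Nodup ∧ l.toFinset = F ∧
    ∀ i : Fin l.length, ∃ x ∈ l.get i, ∀ j : Fin l.length, j < i → x ∉ l.get j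

/-- An interval is a nonempty half-open integer interval `[a,b)`. -/
def IsItv (s : Set ℤ) : Prop := ∃ a b : ℤ, a < b ∧ s = Set.Ico a b

/-- `F|s`: the members of `F` contained in `s`. -/
noncomputable def Res (F : Finset (Set ℤ)) (s : Set ℤ) : Finset (Set ℤ) :=
  F.filter (fun f => f ⊆ s)

/-- `N_x F`: the number of members of `F` containing `x`. -/
noncomputable def Nx (F : Finset (Set ℤ)) (x : ℤ) : ℕ :=
  (F.filter (fun f => x ∈ f)).card

theorem Irredundant.insert {F : Finset (Set ℤ)} (hF : Irredundant F) {s : Set ℤ} {x : ℤ}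
    (hxs : x ∈ s) (hx : ∀ t ∈ F, x ∉ t) : Irredundant (insert s F) := by
  obtain ⟨l, hnd, rfl, hl⟩ := hF
  have hsl : s ∉ l := fun h => hx s (List.mem_toFinset.mpr h) hxs
  refine ⟨l ++ [s], by simpa [List.nodup_append] using ⟨hnd, fun t ht hts => hsl (hts ▸ ht)⟩,
    by ext; simp, fun ⟨i, hi⟩ => ?_⟩
  rw [List.length_append, List.length_singleton, Nat.lt_succ_iff, le_iff_lt_or_eq] at hi
  rcases hi with hi | rfl
  · obtain ⟨y, hy, hyl⟩ := hl ⟨i, hi⟩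
    refine ⟨y, by simpa [List.getElem_append_left hi] using hy, fun ⟨j, _⟩ hj => ?_⟩
    have hji : j < l.length := lt_trans hj hi
    simpa [List.getElem_append_left hji] using hyl ⟨j, hji⟩ hj
  · refine ⟨x, by simpa using hxs, fun ⟨j, _⟩ hj => ?_⟩
    replace hj : j < l.length := hj
    simpa [List.getElem_append_left hj] using hx _ (List.mem_toFinset.mpr (l.getElem_mem hj))

theorem irredundant_image_of_injOn {ι β : Type*} [LinearOrder β] (F : Finset ι) (S : ι → Set ℤ)
    (k : ι → β) (hk : Set.InjOn k F)
    (hS : ∀ i ∈ F, ∃ x ∈ S i, ∀ j ∈ F, k i < k j → x ∉ S j) : Irredundant (F.image S) := by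
  induction F using Finset.induction_on_min_value k with
  | empty => exact ⟨[], by simp, by simp, fun i => i.elim0⟩
  | insert a F haF hmin ih =>
    obtain ⟨x, hxa, hx⟩ := hS a (Finset.mem_insert_self a F)
    rw [Finset.image_insert]
    have hF : Irredundant (F.image S) := ih (hk.mono (by simp)) fun i hi => by
      obtain ⟨y, hyi, hy⟩ := hS i (Finset.mem_insert_of_mem hi)
      exact ⟨y, hyi, fun j hj => hy j (Finset.mem_insert_of_mem hj)⟩
    refine hF.insert hxa ?_
    simp only [Finset.mem_image, forall_exists_index, and_imp]
    rintro _ j hj rfl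
    refine hx j (Finset.mem_insert_of_mem hj) ((hmin j hj).lt_of_ne fun h => ?_)
    exact haF (hk (Finset.mem_insert_self a F) (Finset.mem_insert_of_mem hj) h ▸ hj)

/-- A family of intervals with pairwise distinct left endpoints is irredundant,
and likewise one with pairwise distinct right endpoints. Intervals are given by
their endpoint pairs `(p.1, p.2)` with `p.1 < p.2`. -/
theorem irredundant_of_distinct_endpoints (F : Finset (ℤ × ℤ))
    (hF : ∀ p ∈ F, p.1 < p.2) :
    ((∀ p ∈ F, ∀ q ∈ F, p ≠ q → p.1 ≠ q.1) →
      Irredundant (F.image fun p => Set.Ico p.1 p.2)) ∧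
    ((∀ p ∈ F, ∀ q ∈ F, p ≠ q → p.2 ≠ q.2) →
      Irredundant (F.image fun p => Set.Ico p.1 p.2)) := by
  constructor
  · intro hL
    refine irredundant_image_of_injOn F _ Prod.fst
      (fun p hp q hq h => by_contra fun hpq => hL p hp q hq hpq h) fun p hp => ?_
    exact ⟨p.1, ⟨le_rfl, hF p hp⟩, fun q _ hpq hq => (not_le.mpr hpq) hq.1⟩
  · intro hR
    refine irredundant_image_of_injOn F _ (fun p => -p.2)
      (fun p hp q hq h => by_contra fun hpq => hR p hp q hq hpq (neg_inj.mp h)) fun p hp => ?_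
    refine ⟨p.2 - 1, ⟨by linarith [hF p hp], by linarith⟩, fun q _ hpq hq => ?_⟩
    simp only [Set.mem_Ico] at hq
    omega
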